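/- arXiv:1505.02820 — 3 statements merged into one kernel-verified Lean document; each statement's English description precedes it below -/
import Mathlib

section
/- Consider a full binary tree whose root has weight n, where each internal node of weight m has children of weights ⌈m/2⌉ and ⌊m/2⌋, and whose leaves have weights ℓ_1,...,ℓ_m summing to n. Then the sum of the weights of all nodes (internal and leaves) is at most n + n·log₂ n − Σ_{i=1}^m (ℓ_i·log₂ ℓ_i − ℓ_i), which equals O(n·(1 + H(ℓ_1,...,ℓ_m))). -/
/-! The bound is proved for every real `x` with `m ≤ x + 1` and `1 ≤ 2x` in place of `n` inside
the logarithm, by induction on the tree. A leaf of weight `ℓ` has `ℓ ≤ 2x`, so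
`ℓ log₂ ℓ ≤ ℓ (1 + log₂ x)`. At an internal node both children satisfy the hypothesis with `x / 2`,
and `log₂ (x / 2) = log₂ x - 1` lowers the children's bounds by exactly their total weight `m`,
which pays for the node's own cost `m`. -/

/-- A full binary tree where each internal node of weight `m` has children of
weights `⌈m/2⌉` and `⌊m/2⌋`. -/
inductive HalvingTree : ℕ → Type
  | leaf : (m : ℕ) → HalvingTree m
  | node : (m : ℕ) → 2 ≤ m → HalvingTree ((m + 1) / 2) → HalvingTree (m / 2) → HalvingTree m

/-- Sum of the weights of all nodes (internal and leaves). -/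
def HalvingTree.cost : {n : ℕ} → HalvingTree n → ℕ
  | _, .leaf m => m
  | _, .node m _ l r => m + l.cost + r.cost

/-- The list of the weights of the leaves, from left to right. -/
def HalvingTree.leaves : {n : ℕ} → HalvingTree n → List ℕ
  | _, .leaf m => [m]
  | _, .node _ _ l r => l.leaves ++ r.leaves

open Real

lemma Nat.cast_le_two_mul_of_le_add_one {m : ℕ} {x : ℝ} (hm : (m : ℝ) ≤ x + 1)
    (hx : 1 ≤ 2 * x) : (m : ℝ) ≤ 2 * x := by
  rcases Nat.lt_or_ge m 2 with h | h
  · have : (m : ℝ) ≤ 1 := by exact_mod_cast Nat.le_of_lt_succ h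
    linarith
  · have : (2 : ℝ) ≤ m := by exact_mod_cast h
    linarith

lemma Real.mul_logb_le_mul_logb {b y z : ℝ} (hb : 1 < b) (hy : 0 ≤ y) (hyz : y ≤ z) :
    y * logb b y ≤ y * logb b z := by
  rcases hy.eq_or_lt with rfl | hy
  · simp
  · exact mul_le_mul_of_nonneg_left (logb_le_logb_of_le hb hy hyz) hy.le

namespace HalvingTree

theorem cost_le_of_le_add_one {m : ℕ} (t : HalvingTree m) {x : ℝ} (hm : (m : ℝ) ≤ x + 1)
    (hx : 1 ≤ 2 * x) :
    (t.cost : ℝ) ≤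
      m + m * logb 2 x - (t.leaves.map fun l : ℕ => (l : ℝ) * logb 2 l - l).sum := by
  induction t generalizing x with
  | leaf m =>
    have hlog : (m : ℝ) * logb 2 m ≤ m * logb 2 (2 * x) :=
      mul_logb_le_mul_logb one_lt_two m.cast_nonneg (Nat.cast_le_two_mul_of_le_add_one hm hx)
    rw [logb_mul two_ne_zero (by linarith), logb_self_eq_one one_lt_two] at hlog
    simp only [cost, leaves, List.map_cons, List.map_nil, List.sum_cons, List.sum_nil, add_zero]
    linarith
  | node m hm2 l r ihl ihr =>
    have hm2 : (2 : ℝ) ≤ m := by exact_mod_cast hm2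
    have hceil : (((m + 1) / 2 : ℕ) : ℝ) ≤ x / 2 + 1 := by
      have := Nat.cast_div_le (α := ℝ) (m := m + 1) (n := 2)
      push_cast at this
      linarith
    have hfloor : ((m / 2 : ℕ) : ℝ) ≤ x / 2 + 1 := by
      have := Nat.cast_div_le (α := ℝ) (m := m) (n := 2)
      push_cast at this
      linarith
    have hsplit : (((m + 1) / 2 : ℕ) : ℝ) + ((m / 2 : ℕ) : ℝ) = m := by
      exact_mod_cast (by omega : (m + 1) / 2 + m / 2 = m)
    have hhalf : logb 2 (x / 2) = logb 2 x - 1 := by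
      rw [logb_div (by linarith) two_ne_zero, logb_self_eq_one one_lt_two]
    have hl := ihl hceil (by linarith)
    have hr := ihr hfloor (by linarith)
    rw [hhalf] at hl hr
    simp only [cost, leaves, List.map_append, List.sum_append, Nat.cast_add]
    linear_combination hl + hr + logb 2 x * hsplit

end HalvingTree

theorem halving_tree_cost_entropy_bound_general (n : ℕ) (t : HalvingTree n) :
    (t.cost : ℝ) ≤
      (n : ℝ) + (n : ℝ) * Real.logb 2 n -
        ((t.leaves).map (fun l => (l : ℝ) * Real.logb 2 l - (l : ℝ))).sum := by
  rcases Nat.eq_zero_or_pos n with rfl | hpos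
  · cases t with
    | leaf => simp [HalvingTree.cost, HalvingTree.leaves]
    | node _ h => omega
  · have hn : (1 : ℝ) ≤ n := by exact_mod_cast hpos
    -- the sum in the statement runs over `t.leaves` coerced to `List ℝ`
    simpa only [bind_pure_comp, List.map_eq_map, List.map_map, Function.comp_def] using
      t.cost_le_of_le_add_one (by linarith) (by linarith)

theorem halving_tree_cost_entropy_bound (n : ℕ) (hn : 1 ≤ n) (t : HalvingTree n) :
    (t.cost : ℝ) ≤
      (n : ℝ) + (n : ℝ) * Real.logb 2 n -
        ((t.leaves).map (fun l => (l : ℝ) * Real.logb 2 l - (l : ℝ))).sum :=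
  halving_tree_cost_entropy_bound_general n t
end

section
/- If a sequence of n distinct real numbers is a concatenation of ρ monotone (each nondecreasing or nonincreasing) runs of lengths r_1,...,r_ρ, then any comparison-based sorting algorithm requires at least n·H(r_1,...,r_ρ) − O(n) comparisons in the worst case over such instances, where H(r_1,...,r_ρ) = Σ (r_i/n) log₂(n/r_i). -/
/-- A comparison-based sorting algorithm for inputs of length `n`, modeled as a
binary decision tree: each internal node compares two positions, each leaf outputs
a permutation (the claimed sorting order). -/
inductive CTree (n : ℕ) : Type
  | leaf : Equiv.Perm (Fin n) → CTree n
  | node : Fin n → Fin n → CTree n → CTree n → CTree n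

/-- Run the decision tree on an input, returning the output permutation together
with the number of comparisons performed. -/
noncomputable def CTree.run {n : ℕ} : CTree n → (Fin n → ℝ) → Equiv.Perm (Fin n) × ℕ
  | .leaf σ, _ => (σ, 0)
  | .node i j l r, f =>
      if f i ≤ f j then ((l.run f).1, (l.run f).2 + 1)
      else ((r.run f).1, (r.run f).2 + 1)

/-- Starting position of the `i`-th run. -/
def blockStart {ρ : ℕ} (r : Fin ρ → ℕ) (i : Fin ρ) : ℕ :=
  ∑ j ∈ Finset.univ.filter (fun j => j < i), r j

/-- `f` is a sequence of `n` distinct reals that is a concatenation of `ρ` monotone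
(nondecreasing or nonincreasing) runs of lengths `r 0, …, r (ρ-1)`. -/
def IsRunDecomp {n ρ : ℕ} (r : Fin ρ → ℕ) (f : Fin n → ℝ) : Prop :=
  Function.Injective f ∧
    ∀ i : Fin ρ,
      (∀ a b : Fin n, blockStart r i ≤ (a : ℕ) → (a : ℕ) ≤ (b : ℕ) →
        (b : ℕ) < blockStart r i + r i → f a ≤ f b) ∨
      (∀ a b : Fin n, blockStart r i ≤ (a : ℕ) → (a : ℕ) ≤ (b : ℕ) →
        (b : ℕ) < blockStart r i + r i → f b ≤ f a)

/-!
Adversary argument: feed the tree the rank vectors that increase on every run. A correct tree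
must output the inverse ranking, so these inputs, of which there are at least `n! / ∏ rᵢ!`,
end in pairwise distinct leaves, and one of them costs at least `log₂ (n! / ∏ rᵢ!)` comparisons.
Since `nⁿ ≤ eⁿ n!` and `rᵢ! ≤ rᵢ^rᵢ`, this is at least `n H(r) - n log₂ e`.
-/

open Finset Real
open scoped Nat

namespace CTree

variable {n : ℕ}

def leavesWithin : CTree n → ℕ → Finset (Equiv.Perm (Fin n))
  | .leaf σ, _ => {σ}
  | .node _ _ _ _, 0 => ∅
  | .node _ _ l r, d + 1 => l.leavesWithin d ∪ r.leavesWithin d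

theorem card_leavesWithin_le (t : CTree n) (d : ℕ) : #(t.leavesWithin d) ≤ 2 ^ d := by
  induction t generalizing d with
  | leaf σ => simpa [leavesWithin] using Nat.one_le_two_pow
  | node i j l r ihl ihr =>
    cases d with
    | zero => simp [leavesWithin]
    | succ d =>
      calc #(l.leavesWithin d ∪ r.leavesWithin d)
          ≤ #(l.leavesWithin d) + #(r.leavesWithin d) := card_union_le _ _
        _ ≤ 2 ^ (d + 1) := by rw [pow_succ]; linarith [ihl d, ihr d]

theorem run_fst_mem_leavesWithin (t : CTree n) (f : Fin n → ℝ) {d : ℕ} (h : (t.run f).2 ≤ d) :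
    (t.run f).1 ∈ t.leavesWithin d := by
  induction t generalizing d with
  | leaf σ => simp [run, leavesWithin]
  | node i j l r ihl ihr =>
    cases d with
    | zero => simp only [run] at h; split at h <;> omega
    | succ d =>
      by_cases hij : f i ≤ f j
      · simp only [run, if_pos hij] at h ⊢
        exact mem_union_left _ (ihl (by omega))
      · simp only [run, if_neg hij] at h ⊢
        exact mem_union_right _ (ihr (by omega))

theorem exists_card_le_two_pow_run (t : CTree n) {ι : Type*} [Finite ι] [Nonempty ι]
    (x : ι → Fin n → ℝ) (hx : Function.Injective fun i => (t.run (x i)).1) :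
    ∃ i, Nat.card ι ≤ 2 ^ (t.run (x i)).2 := by
  obtain ⟨i, hi⟩ := Finite.exists_max fun i => (t.run (x i)).2
  refine ⟨i, ?_⟩
  let out : ι → t.leavesWithin (t.run (x i)).2 :=
    fun j => ⟨(t.run (x j)).1, t.run_fst_mem_leavesWithin _ (hi j)⟩
  calc Nat.card ι ≤ Nat.card (t.leavesWithin (t.run (x i)).2) :=
        Nat.card_le_card_of_injective out fun j k h => hx (congrArg Subtype.val h)
    _ ≤ 2 ^ (t.run (x i)).2 := by
        rw [Nat.card_eq_fintype_card, Fintype.card_coe]; exact t.card_leavesWithin_le _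

end CTree

theorem Equiv.Perm.eq_symm_of_monotone_comp {n : ℕ} {p τ : Equiv.Perm (Fin n)}
    (h : Monotone (p ∘ τ)) : τ = p.symm := by
  have hid : Monotone (p ∘ p.symm) := by simpa using monotone_id
  have := Tuple.unique_monotone h hid
  exact Equiv.ext fun a => p.injective (by simpa using congrFun this a)

def MonotoneOnFibers {α β γ : Type*} [LE α] [LE γ] (c : α → β) (p : α → γ) : Prop :=
  ∀ a b, a ≤ b → c a = c b → p a ≤ p b

section SortWithinFibers

variable {n : ℕ} {β : Type*} [LinearOrder β] {c : Fin n → β}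

/-- Sort by the key `(c a, q a)` in lexicographic order: this leaves the already sorted `c`
in place and sorts `q` inside each fibre of `c`. -/
theorem exists_perm_comp_eq_monotoneOnFibers {γ : Type*} [LinearOrder γ] (hc : Monotone c)
    (q : Fin n → γ) : ∃ s : Equiv.Perm (Fin n), c ∘ s = c ∧ MonotoneOnFibers c (q ∘ s) := by
  let key : Fin n → β ×ₗ γ := fun a => toLex (c a, q a)
  let s := Tuple.sort key
  have hkey : Monotone (key ∘ s) := Tuple.monotone_sort key
  have hcs : c ∘ s = c :=
    Tuple.unique_monotone (τ := 1) (Prod.Lex.monotone_fst_ofLex.comp hkey) hc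
  refine ⟨s, hcs, fun a b hab hcab => ?_⟩
  have hle := Prod.Lex.toLex_le_toLex'.mp (hkey hab)
  exact hle.2 ((congrFun hcs a).trans (hcab.trans (congrFun hcs b).symm))

theorem factorial_le_prod_factorial_mul_card_monotoneOnFibers [Fintype β] (hc : Monotone c) :
    n ! ≤ (∏ i, (Fintype.card {a // c a = i})!) *
      Nat.card {p : Equiv.Perm (Fin n) // MonotoneOnFibers c p} := by
  classical
  let merge : {g : Equiv.Perm (Fin n) // c ∘ g = c} ×
      {p : Equiv.Perm (Fin n) // MonotoneOnFibers c p} → Equiv.Perm (Fin n) :=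
    fun gp => gp.2.1 * gp.1.1⁻¹
  have hmerge : Function.Surjective merge := fun q => by
    obtain ⟨s, hcs, hqs⟩ := exists_perm_comp_eq_monotoneOnFibers hc q
    exact ⟨(⟨s, hcs⟩, ⟨q * s, hqs⟩), by simp [merge]⟩
  calc n ! = Nat.card (Equiv.Perm (Fin n)) := by
        rw [Nat.card_eq_fintype_card, Fintype.card_perm, Fintype.card_fin]
    _ ≤ Nat.card ({g : Equiv.Perm (Fin n) // c ∘ g = c} ×
          {p : Equiv.Perm (Fin n) // MonotoneOnFibers c p}) :=
        Nat.card_le_card_of_surjective merge hmerge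
    _ = _ := by rw [Nat.card_prod, Nat.card_eq_fintype_card (α := {g // _}),
          DomMulAct.stabilizer_card]

end SortWithinFibers

section Blocks

variable {ρ : ℕ} (r : Fin ρ → ℕ)

theorem sum_castLE_eq_blockStart (i : Fin ρ) :
    ∑ j : Fin i, r (Fin.castLE i.2.le j) = blockStart r i := by
  rw [blockStart, filter_gt_eq_Iio]
  refine (sum_map univ (Fin.castLEEmb i.2.le) r).symm.trans (congrArg (∑ j ∈ ·, r j) ?_)
  ext j
  simp only [mem_map, mem_univ, true_and, Fin.castLEEmb_apply, mem_Iio]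
  exact ⟨fun ⟨k, hk⟩ => hk ▸ k.2, fun h => ⟨⟨j, h⟩, rfl⟩⟩

theorem blockStart_add_le_blockStart {i j : Fin ρ} (h : i < j) :
    blockStart r i + r i ≤ blockStart r j := by
  rw [blockStart, blockStart, add_comm, ← sum_insert (s := univ.filter (· < i)) (by simp)]
  exact sum_le_sum_of_subset fun k => by
    simp only [mem_insert, mem_filter, mem_univ, true_and]
    rintro (rfl | hk) <;> order

def blockOf (a : Fin (∑ i, r i)) : Fin ρ :=
  (finSigmaFinEquiv.symm a).1

theorem blockStart_blockOf_le (a : Fin (∑ i, r i)) :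
    blockStart r (blockOf r a) ≤ a ∧ (a : ℕ) < blockStart r (blockOf r a) + r (blockOf r a) := by
  obtain ⟨⟨i, k⟩, rfl⟩ := finSigmaFinEquiv.surjective a
  simp only [blockOf, Equiv.symm_apply_apply, finSigmaFinEquiv_apply, sum_castLE_eq_blockStart]
  omega

theorem blockOf_eq {a : Fin (∑ i, r i)} {i : Fin ρ} (h₁ : blockStart r i ≤ a)
    (h₂ : (a : ℕ) < blockStart r i + r i) : blockOf r a = i := by
  obtain ⟨h₃, h₄⟩ := blockStart_blockOf_le r a
  rcases lt_trichotomy (blockOf r a) i with h | h | h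
  · have := blockStart_add_le_blockStart r h; omega
  · exact h
  · have := blockStart_add_le_blockStart r h; omega

theorem monotone_blockOf : Monotone (blockOf r) := fun a b hab => by
  by_contra! h
  have := blockStart_add_le_blockStart r h
  have := blockStart_blockOf_le r a
  have := blockStart_blockOf_le r b
  have : (a : ℕ) ≤ b := hab
  omega

theorem card_fiber_blockOf (i : Fin ρ) : Fintype.card {a // blockOf r a = i} = r i := by
  rw [← Fintype.card_fin (r i)]
  exact Fintype.card_congr <| (finSigmaFinEquiv.symm.subtypeEquiv fun _ => Iff.rfl).trans
    (Equiv.sigmaSubtype i)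

theorem isRunDecomp_of_monotoneOnFibers {p : Equiv.Perm (Fin (∑ i, r i))}
    (hp : MonotoneOnFibers (blockOf r) p) : IsRunDecomp r fun a => ((p a : ℕ) : ℝ) := by
  refine ⟨fun a b h => p.injective (Fin.val_injective (Nat.cast_injective h)), fun i => Or.inl ?_⟩
  intro a b h₁ hab h₂
  have hb : blockOf r b = i := blockOf_eq r (by omega) h₂
  have ha : blockOf r a = i := blockOf_eq r h₁ (by omega)
  exact Nat.cast_le.mpr (hp a b (Fin.le_def.mpr hab) (ha.trans hb.symm))

end Blocks

theorem exists_isRunDecomp_factorial_le {ρ : ℕ} (r : Fin ρ → ℕ) (t : CTree (∑ i, r i))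
    (ht : ∀ f : Fin (∑ i, r i) → ℝ, IsRunDecomp r f →
      ∀ a b, a ≤ b → f ((t.run f).1 a) ≤ f ((t.run f).1 b)) :
    ∃ f, IsRunDecomp r f ∧ (∑ i, r i)! ≤ (∏ i, (r i)!) * 2 ^ (t.run f).2 := by
  let Good := {p : Equiv.Perm (Fin (∑ i, r i)) // MonotoneOnFibers (blockOf r) p}
  have : Nonempty Good := ⟨⟨1, fun _ _ hab _ => hab⟩⟩
  let x : Good → Fin (∑ i, r i) → ℝ := fun p a => ((p.1 a : ℕ) : ℝ)
  have hx (p : Good) : IsRunDecomp r (x p) := isRunDecomp_of_monotoneOnFibers r p.2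
  have hout (p : Good) : (t.run (x p)).1 = p.1.symm :=
    Equiv.Perm.eq_symm_of_monotone_comp fun a b hab => Nat.cast_le.mp (ht _ (hx p) a b hab)
  obtain ⟨p, hp⟩ := t.exists_card_le_two_pow_run x fun p q h =>
    Subtype.ext (Equiv.symm_bijective.injective (by simpa only [hout] using h))
  refine ⟨x p, hx p, ?_⟩
  calc (∑ i, r i)! ≤ (∏ i, (Fintype.card {a // blockOf r a = i})!) * Nat.card Good :=
        factorial_le_prod_factorial_mul_card_monotoneOnFibers (monotone_blockOf r)
    _ ≤ (∏ i, (r i)!) * 2 ^ (t.run (x p)).2 := by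
        simp only [card_fiber_blockOf]
        exact Nat.mul_le_mul_left _ hp

section Entropy

variable {ι : Type*} [Fintype ι] (r : ι → ℕ) {n : ℕ}

theorem cast_div_pos_of_sum_eq (hr : ∀ i, 0 < r i) (hsum : ∑ i, r i = n) (i : ι) :
    (0 : ℝ) < n / r i := by
  have hle : r i ≤ n := hsum ▸ single_le_sum (fun j _ => Nat.zero_le (r j)) (mem_univ i)
  exact div_pos (by exact_mod_cast (hr i).trans_le hle) (by exact_mod_cast hr i)

theorem mul_entropy_eq_logb_prod (hr : ∀ i, 0 < r i) (hsum : ∑ i, r i = n) :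
    (n : ℝ) * ∑ i, ((r i : ℝ) / n) * logb 2 ((n : ℝ) / r i) =
      logb 2 (∏ i, ((n : ℝ) / r i) ^ r i) := by
  have hpos := cast_div_pos_of_sum_eq r hr hsum
  rw [logb_prod _ _ fun i _ => (pow_pos (hpos i) _).ne', mul_sum]
  refine sum_congr rfl fun i _ => ?_
  have : (n : ℝ) ≠ 0 := fun hn => (hpos i).ne' (by rw [hn, zero_div])
  rw [logb_pow]
  field_simp

theorem prod_div_pow_le_exp_mul_factorial_div (hsum : ∑ i, r i = n) :
    ∏ i, ((n : ℝ) / r i) ^ r i ≤ exp n * (n ! / ∏ i, ((r i)! : ℝ)) := by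
  have hfac : (0 : ℝ) < ∏ i, ((r i)! : ℝ) := prod_pos fun i _ => by positivity
  have hfac_le : ∏ i, ((r i)! : ℝ) ≤ ∏ i, (r i : ℝ) ^ r i :=
    prod_le_prod (fun i _ => by positivity) fun i _ => by exact_mod_cast (r i).factorial_le_pow
  have hpow_le : (n : ℝ) ^ n ≤ exp n * n ! := by
    have := pow_div_factorial_le_exp (n : ℝ) (Nat.cast_nonneg n) n
    rwa [div_le_iff₀ (by positivity)] at this
  calc ∏ i, ((n : ℝ) / r i) ^ r i = (n : ℝ) ^ n / ∏ i, (r i : ℝ) ^ r i := by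
        rw [← hsum, ← prod_pow_eq_pow_sum, ← prod_div_distrib]; simp only [div_pow]
    _ ≤ (n : ℝ) ^ n / ∏ i, ((r i)! : ℝ) := div_le_div_of_nonneg_left (by positivity) hfac hfac_le
    _ ≤ exp n * n ! / ∏ i, ((r i)! : ℝ) := div_le_div_of_nonneg_right hpow_le hfac.le
    _ = exp n * (n ! / ∏ i, ((r i)! : ℝ)) := mul_div_assoc _ _ _

theorem mul_entropy_le_of_factorial_le (hr : ∀ i, 0 < r i) (hsum : ∑ i, r i = n) {d : ℕ}
    (h : n ! ≤ (∏ i, (r i)!) * 2 ^ d) :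
    (n : ℝ) * ∑ i, ((r i : ℝ) / n) * logb 2 ((n : ℝ) / r i) ≤ d + 2 * n := by
  have hfac : (0 : ℝ) < ∏ i, ((r i)! : ℝ) := prod_pos fun i _ => by positivity
  have hmultinomial : (n ! : ℝ) / ∏ i, ((r i)! : ℝ) ≤ 2 ^ d := by
    rw [div_le_iff₀ hfac, mul_comm]; exact_mod_cast h
  have hlog2 : (1 : ℝ) / 2 < log 2 := by linarith [log_two_gt_d9]
  rw [mul_entropy_eq_logb_prod r hr hsum]
  calc logb 2 (∏ i, ((n : ℝ) / r i) ^ r i) ≤ logb 2 (exp n * 2 ^ d) :=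
        logb_le_logb_of_le one_lt_two
          (prod_pos fun i _ => pow_pos (cast_div_pos_of_sum_eq r hr hsum i) _)
          ((prod_div_pow_le_exp_mul_factorial_div r hsum).trans
            (mul_le_mul_of_nonneg_left hmultinomial (exp_pos _).le))
    _ = n / log 2 + d := by
        rw [logb_mul (exp_pos _).ne' (by positivity), logb_pow, logb_self_eq_one one_lt_two,
          logb, log_exp, mul_one]
    _ ≤ d + 2 * n := by
        have : (n : ℝ) / log 2 ≤ 2 * n := by
          rw [div_le_iff₀ (by linarith)]; nlinarith [(Nat.cast_nonneg n : (0 : ℝ) ≤ n)]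
        linarith

end Entropy

theorem sorting_runs_entropy_lower_bound :
    ∃ C : ℝ, 0 < C ∧
      ∀ (n ρ : ℕ) (r : Fin ρ → ℕ), (∀ i, 0 < r i) → (∑ i, r i) = n →
        ∀ t : CTree n,
          (∀ f : Fin n → ℝ, IsRunDecomp r f →
            ∀ a b : Fin n, a ≤ b → f ((t.run f).1 a) ≤ f ((t.run f).1 b)) →
          ∃ f : Fin n → ℝ, IsRunDecomp r f ∧
            (n : ℝ) * (∑ i, ((r i : ℝ) / n) * Real.logb 2 ((n : ℝ) / r i)) - C * n
              ≤ ((t.run f).2 : ℝ) := by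
  refine ⟨2, two_pos, fun n ρ r hr hsum t ht => ?_⟩
  subst hsum
  obtain ⟨f, hf, hcount⟩ := exists_isRunDecomp_factorial_le r t ht
  exact ⟨f, hf, by linarith [mul_entropy_le_of_factorial_le r hr rfl hcount]⟩
end

section
/- Define a cost function on the FFT recursion tree over a coefficient vector of length n = 2^m: a node whose coefficient subvector is all zeros has cost 0 and no children; otherwise a node with vector of length m ≥ 2 has cost m and two children given by the even-indexed and odd-indexed subvectors. If ζ is the total number of zero coefficients and the zeros partition into equivalence classes of sizes n_1,...,n_η (each class being a maximal all-zero node of the recursion tree), then the total cost is at most C·((n−ζ)·log₂ n + Σ_{i=1}^η n_i·log₂(n/n_i)) + C·n for some absolute constant C. -/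
/-!
Charge the cost to the coefficients: a live node of length `2 ^ (m - k)` costs one unit per index
it contains, so the total cost is at most `∑ₜ wₜ`, where `wₜ` is the number of depths at which the
node containing `t` is not identically zero. A nonzero coefficient has `wₜ = m + 1`. If `t` lies in a
maximal all-zero node of depth `d`, then `wₜ = d = log₂ (n / nᵢ)`; in particular that node is
determined by `t`, so the given classes are pairwise disjoint and, having total size `ζ`, they cover
each zero exactly once.
-/

open Classical in
noncomputable def fftCost : (m : ℕ) → (ℕ → ℝ) → ℕ
  | 0, a => if a 0 = 0 then 0 else 1
  | m + 1, a =>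
      if ∀ i < 2 ^ (m + 1), a i = 0 then 0
      else 2 ^ (m + 1) + fftCost m (fun j => a (2 * j)) + fftCost m (fun j => a (2 * j + 1))

open Finset

theorem Finset.sum_range_two_mul {β : Type*} [AddCommMonoid β] (f : ℕ → β) (n : ℕ) :
    ∑ i ∈ range (2 * n), f i = ∑ j ∈ range n, (f (2 * j) + f (2 * j + 1)) := by
  induction n with
  | zero => simp
  | succ n ih => rw [Nat.mul_succ, sum_range_succ, sum_range_succ, ih, sum_range_succ, add_assoc]

theorem Real.logb_two_pow (k : ℕ) : Real.logb 2 (2 ^ k) = k := by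
  rw [Real.logb_pow, Real.logb_self_eq_one one_lt_two, mul_one]

theorem Real.logb_two_pow_div_two_pow {d m : ℕ} (hd : d ≤ m) :
    Real.logb 2 (2 ^ m / 2 ^ (m - d)) = d := by
  rw [div_eq_mul_inv, ← pow_sub₀ _ two_ne_zero (m.sub_le d), Nat.sub_sub_self hd,
    Real.logb_two_pow]

namespace PrunedFFT

/-- The depth-`k` node containing `t`: `k` parity splits leave the residue class of `t`
modulo `2 ^ k`. -/
def node (m k t : ℕ) : Finset ℕ := {s ∈ range (2 ^ m) | s ≡ t [MOD 2 ^ k]}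

variable {M : Type*} [Zero M] {m k l d r t : ℕ} {a : ℕ → M}

def NodeVanishes (m k : ℕ) (a : ℕ → M) (t : ℕ) : Prop := ∀ s ∈ node m k t, a s = 0

open Classical in
noncomputable def liveDepths (m : ℕ) (a : ℕ → M) (t : ℕ) : Finset ℕ :=
  {k ∈ range (m + 1) | ¬ NodeVanishes m k a t}

structure IsMaximalZeroNode (m : ℕ) (a : ℕ → M) (d r : ℕ) : Prop where
  residue_lt : r < 2 ^ d
  depth_le : d ≤ m
  vanishes : NodeVanishes m d a r
  parent_live : 0 < d → ¬ NodeVanishes m (d - 1) a r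

theorem mem_node {s : ℕ} : s ∈ node m k t ↔ s < 2 ^ m ∧ s ≡ t [MOD 2 ^ k] := by
  simp [node]

theorem card_node (hk : k ≤ m) : #(node m k t) = 2 ^ (m - k) := by
  have hdvd : 2 ^ k ∣ 2 ^ m := pow_dvd_pow 2 hk
  rw [node, ← Nat.count_eq_card_filter_range, Nat.count_modEq_card _ (by positivity),
    Nat.mod_eq_zero_of_dvd hdvd, if_neg (Nat.not_lt_zero _), add_zero, Nat.pow_div hk two_pos]

theorem node_congr {t' : ℕ} (h : t ≡ t' [MOD 2 ^ k]) : node m k t = node m k t' := by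
  ext s
  simp only [mem_node]
  exact and_congr_right fun _ => ⟨fun hs => hs.trans h, fun hs => hs.trans h.symm⟩

theorem nodeVanishes_zero_iff : NodeVanishes m 0 a t ↔ ∀ s < 2 ^ m, a s = 0 := by
  simp [NodeVanishes, mem_node, Nat.modEq_one]

theorem nodeVanishes_succ_succ_iff :
    NodeVanishes (m + 1) (k + 1) a t ↔ NodeVanishes m k (fun s => a (2 * s + t % 2)) (t / 2) := by
  simp only [NodeVanishes, mem_node, Nat.ModEq, pow_succ', Nat.mod_mul]
  constructor
  · intro h s ⟨hs, hmod⟩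
    refine h _ ⟨by omega, ?_⟩
    rw [show (2 * s + t % 2) / 2 = s by omega, hmod]
    omega
  · intro h s ⟨hs, hmod⟩
    have hparity : s % 2 = t % 2 := by omega
    have hhalf : s / 2 % 2 ^ k = t / 2 % 2 ^ k := by omega
    simpa [← hparity, Nat.div_add_mod] using h (s / 2) ⟨by omega, hhalf⟩

theorem nodeVanishes_congr {t' : ℕ} (h : t ≡ t' [MOD 2 ^ k]) :
    NodeVanishes m k a t ↔ NodeVanishes m k a t' := by
  rw [NodeVanishes, NodeVanishes, node_congr h]

theorem nodeVanishes_of_forall_mul_add (hr : r < 2 ^ d) (hd : d ≤ m)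
    (h : ∀ j < 2 ^ (m - d), a (2 ^ d * j + r) = 0) : NodeVanishes m d a r := by
  intro s hs
  obtain ⟨hsm, hsr⟩ := mem_node.1 hs
  have hquot : s / 2 ^ d < 2 ^ (m - d) := by
    rw [Nat.div_lt_iff_lt_mul (by positivity), Nat.pow_sub_mul_pow 2 hd]
    exact hsm
  have := h _ hquot
  rwa [← Nat.mod_eq_of_lt hr, ← hsr, Nat.div_add_mod] at this

theorem NodeVanishes.mono (h : NodeVanishes m k a t) (hkl : k ≤ l) : NodeVanishes m l a t :=
  fun s hs => h s (mem_node.2 ⟨(mem_node.1 hs).1, (mem_node.1 hs).2.of_dvd (pow_dvd_pow 2 hkl)⟩)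

theorem mem_liveDepths : k ∈ liveDepths m a t ↔ k ≤ m ∧ ¬ NodeVanishes m k a t := by
  simp [liveDepths]

theorem liveDepths_succ (h : ¬ ∀ s < 2 ^ (m + 1), a s = 0) :
    liveDepths (m + 1) a t =
      insert 0 ((liveDepths m (fun s => a (2 * s + t % 2)) (t / 2)).map (addRightEmbedding 1)) := by
  ext (_ | k) <;> simp [liveDepths, nodeVanishes_zero_iff, nodeVanishes_succ_succ_iff, h]

theorem card_liveDepths_succ (h : ¬ ∀ s < 2 ^ (m + 1), a s = 0) :
    #(liveDepths (m + 1) a t) = #(liveDepths m (fun s => a (2 * s + t % 2)) (t / 2)) + 1 := by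
  rw [liveDepths_succ h, card_insert_of_notMem (by simp), card_map]

theorem fftCost_le_sum_card_liveDepths (m : ℕ) (a : ℕ → ℝ) :
    fftCost m a ≤ ∑ t ∈ range (2 ^ m), #(liveDepths m a t) := by
  induction m generalizing a with
  | zero =>
    by_cases h : a 0 = 0
    · simp [fftCost, h]
    · have hlive : ¬ NodeVanishes 0 0 a 0 := by simpa [nodeVanishes_zero_iff] using h
      simp only [fftCost, h, if_false]
      exact card_pos.2 ⟨0, mem_liveDepths.2 ⟨le_rfl, hlive⟩⟩
  | succ m ih =>
    rw [fftCost]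
    split_ifs with h
    · exact Nat.zero_le _
    · calc 2 ^ (m + 1) + fftCost m (fun j => a (2 * j)) + fftCost m (fun j => a (2 * j + 1))
          ≤ 2 ^ (m + 1) + ∑ j ∈ range (2 ^ m), #(liveDepths m (fun s => a (2 * s)) j)
              + ∑ j ∈ range (2 ^ m), #(liveDepths m (fun s => a (2 * s + 1)) j) := by
            gcongr <;> apply ih
        _ = ∑ t ∈ range (2 ^ (m + 1)), #(liveDepths (m + 1) a t) := by
            have hodd (j : ℕ) : (2 * j + 1) / 2 = j := by omega
            rw [pow_succ', sum_range_two_mul]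
            simp only [card_liveDepths_succ h, sum_add_distrib, Nat.mul_mod_right,
              Nat.mul_add_mod_self_left, Nat.mul_div_cancel_left _ two_pos, hodd, sum_const,
              card_range, smul_eq_mul, add_zero, Nat.one_mod, mul_one]
            ring

theorem card_liveDepths_le : #(liveDepths m a t) ≤ m + 1 :=
  (card_le_card fun _ hk => mem_range.2 (Nat.lt_succ_of_le (mem_liveDepths.1 hk).1)).trans
    (card_range _).le

namespace IsMaximalZeroNode

theorem liveDepths_eq (h : IsMaximalZeroNode m a d r) (ht : t ∈ node m d r) :
    liveDepths m a t = range d := by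
  have hmod : t ≡ r [MOD 2 ^ d] := (mem_node.1 ht).2
  have hvan : NodeVanishes m d a t := (nodeVanishes_congr hmod).2 h.vanishes
  have hlive : 0 < d → ¬ NodeVanishes m (d - 1) a t := by
    rw [nodeVanishes_congr (hmod.of_dvd (pow_dvd_pow 2 (d.sub_le 1)))]
    exact h.parent_live
  ext k
  rw [mem_liveDepths, mem_range]
  constructor
  · rintro ⟨-, hk⟩
    by_contra! hdk
    exact hk (hvan.mono hdk)
  · intro hk
    exact ⟨by have := h.depth_le; omega, fun hvk => hlive (by omega) (hvk.mono (by omega))⟩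

theorem card_liveDepths (h : IsMaximalZeroNode m a d r) (ht : t ∈ node m d r) :
    #(liveDepths m a t) = d := by
  rw [h.liveDepths_eq ht, card_range]

theorem eq_of_mem_node {d' r' : ℕ} (h : IsMaximalZeroNode m a d r)
    (h' : IsMaximalZeroNode m a d' r') (ht : t ∈ node m d r) (ht' : t ∈ node m d' r') :
    (d, r) = (d', r') := by
  obtain rfl : d = d' := (h.card_liveDepths ht).symm.trans (h'.card_liveDepths ht')
  have hrr' : r ≡ r' [MOD 2 ^ d] := (mem_node.1 ht).2.symm.trans (mem_node.1 ht').2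
  rw [Nat.ModEq, Nat.mod_eq_of_lt h.residue_lt, Nat.mod_eq_of_lt h'.residue_lt] at hrr'
  rw [hrr']

end IsMaximalZeroNode

variable {ι : Type*} [Fintype ι] {c : ι → ℕ × ℕ}

theorem sum_card_liveDepths_zeros [DecidableEq M]
    (hmax : ∀ i, IsMaximalZeroNode m a (c i).1 (c i).2) (hinj : Function.Injective c)
    (hsize : ∑ i, 2 ^ (m - (c i).1) = #{t ∈ range (2 ^ m) | a t = 0}) :
    ∑ t ∈ range (2 ^ m) with a t = 0, #(liveDepths m a t) = ∑ i, 2 ^ (m - (c i).1) * (c i).1 := by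
  have hsub (i : ι) : node m (c i).1 (c i).2 ⊆ {t ∈ range (2 ^ m) | a t = 0} := fun s hs =>
    mem_filter.2 ⟨mem_range.2 (mem_node.1 hs).1, (hmax i).vanishes s hs⟩
  have hdisj : (↑(univ : Finset ι) : Set ι).PairwiseDisjoint fun i => node m (c i).1 (c i).2 :=
    fun i _ j _ hij => disjoint_left.2 fun _ hti htj =>
      hij (hinj ((hmax i).eq_of_mem_node (hmax j) hti htj))
  have hcover : univ.biUnion (fun i => node m (c i).1 (c i).2) = {t ∈ range (2 ^ m) | a t = 0} :=
    eq_of_subset_of_card_le (biUnion_subset.2 fun i _ => hsub i) <| by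
      rw [card_biUnion hdisj, ← hsize]
      exact (sum_congr rfl fun i _ => card_node (hmax i).depth_le).ge
  rw [← hcover, sum_biUnion hdisj]
  refine sum_congr rfl fun i _ => ?_
  rw [sum_congr rfl fun t ht => (hmax i).card_liveDepths ht, sum_const,
    card_node (hmax i).depth_le, smul_eq_mul]

theorem fftCost_le_of_isMaximalZeroNode {a : ℕ → ℝ}
    (hmax : ∀ i, IsMaximalZeroNode m a (c i).1 (c i).2) (hinj : Function.Injective c)
    (hsize : ∑ i, 2 ^ (m - (c i).1) = #{t ∈ range (2 ^ m) | a t = 0}) :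
    fftCost m a ≤ ∑ i, 2 ^ (m - (c i).1) * (c i).1 + #{t ∈ range (2 ^ m) | a t ≠ 0} * (m + 1) :=
  calc fftCost m a ≤ ∑ t ∈ range (2 ^ m), #(liveDepths m a t) := fftCost_le_sum_card_liveDepths m a
    _ = ∑ t ∈ range (2 ^ m) with a t = 0, #(liveDepths m a t)
          + ∑ t ∈ range (2 ^ m) with a t ≠ 0, #(liveDepths m a t) :=
        (sum_filter_add_sum_filter_not _ _ _).symm
    _ ≤ _ := add_le_add (sum_card_liveDepths_zeros hmax hinj hsize).le
        (sum_le_card_nsmul _ _ _ fun _ _ => card_liveDepths_le)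

end PrunedFFT

open PrunedFFT Finset

open Classical in
theorem fft_pruned_cost_bound :
    ∃ C : ℝ, 0 < C ∧
      ∀ (m : ℕ) (a : ℕ → ℝ) (ζ η : ℕ) (sz : Fin η → ℕ) (cls : Fin η → ℕ × ℕ),
        -- ζ is the number of zero coefficients
        ζ = ((Finset.range (2 ^ m)).filter (fun i => a i = 0)).card →
        -- each class is a maximal all-zero node of the recursion tree,
        -- given by a depth `d = (cls i).1` and a residue `r = (cls i).2 < 2^d`
        (∀ i : Fin η,
          (cls i).2 < 2 ^ (cls i).1 ∧ (cls i).1 ≤ m ∧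
          (∀ j < 2 ^ (m - (cls i).1), a (2 ^ (cls i).1 * j + (cls i).2) = 0) ∧
          (1 ≤ (cls i).1 →
            ∃ t < 2 ^ m, t % 2 ^ ((cls i).1 - 1) = (cls i).2 % 2 ^ ((cls i).1 - 1) ∧
              a t ≠ 0) ∧
          sz i = 2 ^ (m - (cls i).1)) →
        Function.Injective cls →
        -- the classes partition the zeros
        (∑ i, sz i) = ζ →
        (fftCost m a : ℝ) ≤
          C * (((2 ^ m : ℝ) - (ζ : ℝ)) * Real.logb 2 (2 ^ m) +
              ∑ i, (sz i : ℝ) * Real.logb 2 ((2 ^ m : ℝ) / (sz i : ℝ))) +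
            C * 2 ^ m := by
  refine ⟨1, one_pos, fun m a ζ η sz cls hζ hcls hinj hsz => ?_⟩
  have hsz_eq (i : Fin η) : sz i = 2 ^ (m - (cls i).1) := (hcls i).2.2.2.2
  have hmax (i : Fin η) : IsMaximalZeroNode m a (cls i).1 (cls i).2 := by
    obtain ⟨hr, hd, hzero, hparent, -⟩ := hcls i
    refine ⟨hr, hd, nodeVanishes_of_forall_mul_add hr hd hzero, fun hpos hvan => ?_⟩
    obtain ⟨t, ht, hmod, hat⟩ := hparent hpos
    exact hat (hvan t (mem_node.2 ⟨ht, hmod⟩))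
  have hcost := fftCost_le_of_isMaximalZeroNode hmax hinj (by simp only [← hsz_eq, hsz, hζ])
  have hnonzero : (#{t ∈ range (2 ^ m) | a t ≠ 0} : ℝ) = 2 ^ m - ζ := by
    rw [hζ, eq_sub_iff_add_eq', ← Nat.cast_add, card_filter_add_card_filter_not, card_range]
    simp
  have hlog (i : Fin η) : (sz i : ℝ) * Real.logb 2 (2 ^ m / sz i) = sz i * (cls i).1 := by
    rw [hsz_eq, Nat.cast_pow, Nat.cast_two, Real.logb_two_pow_div_two_pow (hmax i).depth_le]
  rw [Real.logb_two_pow, sum_congr rfl fun i _ => hlog i, ← hnonzero]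
  have hcostR : (fftCost m a : ℝ) ≤ ∑ i, (sz i : ℝ) * (cls i).1
      + #{t ∈ range (2 ^ m) | a t ≠ 0} * (m + 1) := by
    simp only [← hsz_eq] at hcost
    exact_mod_cast hcost
  have hnonzero_le : (#{t ∈ range (2 ^ m) | a t ≠ 0} : ℝ) ≤ 2 ^ m := by
    exact_mod_cast (card_filter_le _ _).trans (card_range _).le
  linarith
end
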